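/- Let ℓ∞⁺ denote the set of bounded sequences s : ℕ → ℝ≥0 with norm ‖s‖ := sup_{i∈ℕ} s i, and let Γ : ℓ∞⁺ → ℓ∞⁺ be continuous (with respect to the sup-norm), monotone, subadditive, and homogeneous of degree one. Then the following are equivalent: (i) ‖Γⁿ(𝟙)‖ < 1 for some n ∈ ℕ (equivalently, the spectral radius r(Γ) = inf_{n≥1} ‖Γⁿ(𝟙)‖^{1/n} is less than 1); (ii) there exist M > 0 and a ∈ (0,1) with ‖Γᵏ(s)‖ ≤ M aᵏ ‖s‖ for all s ∈ ℓ∞⁺ and k ∈ ℕ (UGES); (iii) there exists a nonincreasing sequence b : ℕ → ℝ≥0 with b(k) → 0 such that ‖Γᵏ(s)‖ ≤ b(k)·‖s‖ for all s ∈ ℓ∞⁺ and k ∈ ℕ (UGAS); (iv) there exist λ ∈ (0,1) and s⁰ ∈ ℓ∞⁺ with inf_{i∈ℕ} s⁰_i > 0 such that Γ(s⁰) ≤ λ·s⁰ componentwise (point of strict decay). -/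

import Mathlib

open scoped NNReal
open Filter

/-- A nonnegative sequence belongs to `ℓ∞⁺` iff it is bounded. -/
def InLinf (s : ℕ → ℝ≥0) : Prop := BddAbove (Set.range s)

/-- The sup-norm `‖s‖ = ⨆ i, s i` on `ℓ∞⁺`. -/
noncomputable def lnorm (s : ℕ → ℝ≥0) : ℝ≥0 := ⨆ i, s i

/-- The constant sequence `𝟙`. -/
def oneSeq : ℕ → ℝ≥0 := fun _ => 1

/-- The sup-norm distance between two elements of `ℓ∞⁺`. -/
noncomputable def supDist (r s : ℕ → ℝ≥0) : ℝ := ⨆ i, |(r i : ℝ) - (s i : ℝ)|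

/-!
Write `c k = ‖Γᵏ 𝟙‖`. Since `s ≤ ‖s‖ · 𝟙`, monotonicity and homogeneity give `Γᵏ s ≤ ‖s‖ · Γᵏ 𝟙`,
so `‖Γᵏ s‖ ≤ c k ‖s‖` and `c` is submultiplicative; a single `c n < 1` therefore forces geometric
decay of `c`, which yields UGES and UGAS, and UGAS gives back `c n < 1` by testing on `𝟙`.
If `c m ≤ λᵐ` with `λ < 1`, then `s⁰ = ∑_{j<m} λ⁻ʲ Γʲ 𝟙 ≥ 𝟙` is a point of strict decay: by
subadditivity `Γ s⁰ ≤ λ ∑_{j=1}^{m} λ⁻ʲ Γʲ 𝟙`, and the new term `λ⁻ᵐ Γᵐ 𝟙` is at most the dropped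
term `𝟙`. Conversely, from `𝟙 ≤ ε⁻¹ s⁰` with `ε = inf s⁰` we get `c n ≤ ε⁻¹ λⁿ ‖s⁰‖ → 0`.
-/

lemma exists_pos_lt_one_le_pow {θ : ℝ≥0} (hθ : θ < 1) {n : ℕ} (hn : n ≠ 0) :
    ∃ a : ℝ≥0, 0 < a ∧ a < 1 ∧ θ ≤ a ^ n := by
  set θ' := max θ 2⁻¹
  have hθ'1 : θ' < 1 := max_lt hθ (by norm_num)
  refine ⟨θ' ^ (n⁻¹ : ℝ), NNReal.rpow_pos (by positivity), NNReal.rpow_lt_one hθ'1 (by positivity),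
    ?_⟩
  rw [NNReal.rpow_inv_natCast_pow _ hn]
  exact le_max_left _ _

lemma exists_const_mul_pow_lt_one (K : ℝ≥0) {a : ℝ≥0} (ha : a < 1) : ∃ n : ℕ, K * a ^ n < 1 := by
  have h := (NNReal.tendsto_pow_atTop_nhds_zero_of_lt_one ha).const_mul K
  rw [mul_zero] at h
  exact (h.eventually (gt_mem_nhds one_pos)).exists

lemma exists_geometric_bound_of_submultiplicative {c : ℕ → ℝ≥0}
    (hc : ∀ m n, c (m + n) ≤ c m * c n) {n : ℕ} (hn : n ≠ 0) (hcn : c n < 1) :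
    ∃ M : ℝ≥0, 0 < M ∧ ∃ a : ℝ≥0, 0 < a ∧ a < 1 ∧ ∀ k, c k ≤ M * a ^ k := by
  obtain ⟨a, ha0, ha1, hcan⟩ := exists_pos_lt_one_le_pow hcn hn
  set C := ∑ r ∈ Finset.range n, c r
  have han : a ^ n ≠ 0 := (pow_pos ha0 n).ne'
  have hblock : ∀ q r, c (n * q + r) ≤ (a ^ n) ^ q * c r := by
    intro q r
    induction q with
    | zero => simp
    | succ q ih =>
      calc c (n * (q + 1) + r) = c (n + (n * q + r)) := by ring_nf
        _ ≤ c n * c (n * q + r) := hc _ _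
        _ ≤ a ^ n * ((a ^ n) ^ q * c r) := by gcongr
        _ = (a ^ n) ^ (q + 1) * c r := by ring
  refine ⟨(C + 1) * (a ^ n)⁻¹, by positivity, a, ha0, ha1, fun k => ?_⟩
  have hr : k % n < n := Nat.mod_lt _ (Nat.pos_of_ne_zero hn)
  have hcr : c (k % n) ≤ C + 1 :=
    (Finset.single_le_sum (fun _ _ => zero_le) (Finset.mem_range.mpr hr)).trans le_self_add
  have hpow : a ^ n ≤ a ^ (k % n) := pow_le_pow_of_le_one zero_le ha1.le hr.le
  calc c k = c (n * (k / n) + k % n) := by rw [Nat.div_add_mod]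
    _ ≤ (a ^ n) ^ (k / n) * (C + 1) := (hblock _ _).trans (by gcongr)
    _ = (C + 1) * (a ^ n)⁻¹ * (a ^ (n * (k / n)) * a ^ n) := by
        rw [pow_mul]; field_simp
    _ ≤ (C + 1) * (a ^ n)⁻¹ * (a ^ (n * (k / n)) * a ^ (k % n)) := by gcongr
    _ = (C + 1) * (a ^ n)⁻¹ * a ^ k := by rw [← pow_add, Nat.div_add_mod]

lemma Finset.sum_range_succ_le_sum_range {M : Type*} [AddCommMonoid M] [PartialOrder M]
    [IsOrderedCancelAddMonoid M] (g : ℕ → M) {m : ℕ} (h : g m ≤ g 0) :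
    ∑ j ∈ Finset.range m, g (j + 1) ≤ ∑ j ∈ Finset.range m, g j := by
  refine le_of_add_le_add_right (a := g 0) ?_
  rw [← Finset.sum_range_succ', Finset.sum_range_succ]
  exact add_le_add_right h _

lemma InLinf.of_le {s : ℕ → ℝ≥0} {C : ℝ≥0} (h : ∀ i, s i ≤ C) : InLinf s :=
  ⟨C, by rintro _ ⟨i, rfl⟩; exact h i⟩

lemma le_lnorm {s : ℕ → ℝ≥0} (hs : InLinf s) (i : ℕ) : s i ≤ lnorm s := le_ciSup hs i

lemma lnorm_le {s : ℕ → ℝ≥0} {C : ℝ≥0} (h : ∀ i, s i ≤ C) : lnorm s ≤ C := ciSup_le h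

lemma inLinf_oneSeq : InLinf oneSeq := InLinf.of_le fun _ => le_rfl

lemma lnorm_oneSeq : lnorm oneSeq = 1 := ciSup_const

lemma InLinf.const_mul {s : ℕ → ℝ≥0} (hs : InLinf s) (c : ℝ≥0) : InLinf fun j => c * s j :=
  InLinf.of_le fun i => mul_le_mul_right (le_lnorm hs i) c

lemma InLinf.sum {ι : Type*} {F : Finset ι} {f : ι → ℕ → ℝ≥0} (hf : ∀ j ∈ F, InLinf (f j)) :
    InLinf fun i => ∑ j ∈ F, f j i :=
  InLinf.of_le fun i => Finset.sum_le_sum fun j hj => le_lnorm (hf j hj) i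

def IsUGES (Γ : (ℕ → ℝ≥0) → ℕ → ℝ≥0) : Prop :=
  ∃ M : ℝ≥0, 0 < M ∧ ∃ a : ℝ≥0, 0 < a ∧ a < 1 ∧
    ∀ s, InLinf s → ∀ k : ℕ, lnorm (Γ^[k] s) ≤ M * a ^ k * lnorm s

def IsUGAS (Γ : (ℕ → ℝ≥0) → ℕ → ℝ≥0) : Prop :=
  ∃ b : ℕ → ℝ≥0, Antitone b ∧ Tendsto b atTop (nhds 0) ∧
    ∀ s, InLinf s → ∀ k : ℕ, lnorm (Γ^[k] s) ≤ b k * lnorm s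

def HasStrictDecayPoint (Γ : (ℕ → ℝ≥0) → ℕ → ℝ≥0) : Prop :=
  ∃ lam : ℝ≥0, 0 < lam ∧ lam < 1 ∧ ∃ s0 : ℕ → ℝ≥0, InLinf s0 ∧ (0 < ⨅ i, s0 i) ∧
    ∀ i, Γ s0 i ≤ lam * s0 i

noncomputable def weightedOrbitSum (Γ : (ℕ → ℝ≥0) → ℕ → ℝ≥0) (lam : ℝ≥0) (m : ℕ) : ℕ → ℝ≥0 :=
  fun i => ∑ j ∈ Finset.range m, (lam ^ j)⁻¹ * Γ^[j] oneSeq i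

section GainOperator

variable {Γ : (ℕ → ℝ≥0) → ℕ → ℝ≥0}
  (hmap : ∀ s, InLinf s → InLinf (Γ s))
  (hmono : ∀ r s, InLinf r → InLinf s → (∀ i, r i ≤ s i) → ∀ i, Γ r i ≤ Γ s i)
  (hsub : ∀ r s, InLinf r → InLinf s → ∀ i, Γ (fun j => r j + s j) i ≤ Γ r i + Γ s i)
  (hhom : ∀ (c : ℝ≥0) (s : ℕ → ℝ≥0), InLinf s → ∀ i, Γ (fun j => c * s j) i = c * Γ s i)

lemma ne_zero_of_lnorm_iterate_lt_one {n : ℕ} (hn : lnorm (Γ^[n] oneSeq) < 1) : n ≠ 0 := by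
  rintro rfl
  simp [lnorm_oneSeq] at hn

lemma one_le_weightedOrbitSum (lam : ℝ≥0) {m : ℕ} (hm : m ≠ 0) (i : ℕ) :
    1 ≤ weightedOrbitSum Γ lam m i := by
  have h0 : (lam ^ 0)⁻¹ * Γ^[0] oneSeq i = 1 := by simp [oneSeq]
  rw [← h0]
  exact Finset.single_le_sum (f := fun j => (lam ^ j)⁻¹ * Γ^[j] oneSeq i) (fun _ _ => zero_le)
    (Finset.mem_range.mpr (Nat.pos_of_ne_zero hm))

lemma IsUGES.isUGAS (h : IsUGES Γ) : IsUGAS Γ := by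
  obtain ⟨M, -, a, -, ha1, hbound⟩ := h
  refine ⟨fun k => M * a ^ k, fun m n hmn => ?_, ?_, hbound⟩
  · exact mul_le_mul_right (pow_le_pow_of_le_one zero_le ha1.le hmn) M
  · simpa using (NNReal.tendsto_pow_atTop_nhds_zero_of_lt_one ha1).const_mul M

lemma IsUGAS.exists_lnorm_iterate_lt_one (h : IsUGAS Γ) :
    ∃ n, lnorm (Γ^[n] oneSeq) < 1 := by
  obtain ⟨b, -, hb0, hbound⟩ := h
  obtain ⟨n, hn⟩ := (hb0.eventually (gt_mem_nhds one_pos)).exists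
  refine ⟨n, lt_of_le_of_lt ?_ hn⟩
  simpa [lnorm_oneSeq] using hbound oneSeq inLinf_oneSeq n

include hsub hhom in
lemma map_sum_le {ι : Type*} (F : Finset ι) {f : ι → ℕ → ℝ≥0} (hf : ∀ j ∈ F, InLinf (f j))
    (i : ℕ) : Γ (fun i' => ∑ j ∈ F, f j i') i ≤ ∑ j ∈ F, Γ (f j) i := by
  classical
  induction F using Finset.induction_on generalizing i with
  | empty => simpa using (hhom 0 oneSeq inLinf_oneSeq i).le
  | insert j F hj ih =>
    have hfF : ∀ j ∈ F, InLinf (f j) := fun j' hj' => hf j' (Finset.mem_insert_of_mem hj')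
    simp only [Finset.sum_insert hj]
    calc Γ (fun i' => f j i' + ∑ j ∈ F, f j i') i ≤ Γ (f j) i + Γ (fun i' => ∑ j ∈ F, f j i') i :=
          hsub _ _ (hf j (Finset.mem_insert_self j F)) (InLinf.sum hfF) i
      _ ≤ Γ (f j) i + ∑ j ∈ F, Γ (f j) i := by gcongr; exact ih hfF i

include hmap

lemma inLinf_iterate (k : ℕ) {s : ℕ → ℝ≥0} (hs : InLinf s) : InLinf (Γ^[k] s) := by
  induction k with
  | zero => exact hs
  | succ k ih => rw [Function.iterate_succ_apply']; exact hmap _ ih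

include hmono in
lemma iterate_mono (k : ℕ) {r s : ℕ → ℝ≥0} (hr : InLinf r) (hs : InLinf s) (hrs : ∀ i, r i ≤ s i)
    (i : ℕ) : Γ^[k] r i ≤ Γ^[k] s i := by
  induction k generalizing i with
  | zero => exact hrs i
  | succ k ih =>
    simp only [Function.iterate_succ_apply']
    exact hmono _ _ (inLinf_iterate hmap k hr) (inLinf_iterate hmap k hs) ih i

include hhom in
lemma iterate_const_mul (k : ℕ) (c : ℝ≥0) {s : ℕ → ℝ≥0} (hs : InLinf s) (i : ℕ) :
    Γ^[k] (fun j => c * s j) i = c * Γ^[k] s i := by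
  induction k generalizing i with
  | zero => rfl
  | succ k ih =>
    simp only [Function.iterate_succ_apply']
    rw [funext ih]
    exact hhom c _ (inLinf_iterate hmap k hs) i

include hmono hhom in
lemma iterate_le_lnorm_mul (k : ℕ) {s : ℕ → ℝ≥0} (hs : InLinf s) (i : ℕ) :
    Γ^[k] s i ≤ lnorm s * Γ^[k] oneSeq i := by
  have hle : ∀ j, s j ≤ lnorm s * oneSeq j := fun j => by simpa [oneSeq] using le_lnorm hs j
  calc Γ^[k] s i ≤ Γ^[k] (fun j => lnorm s * oneSeq j) i :=
        iterate_mono hmap hmono k hs (inLinf_oneSeq.const_mul _) hle i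
    _ = lnorm s * Γ^[k] oneSeq i := iterate_const_mul hmap hhom k _ inLinf_oneSeq i

include hmono hhom in
lemma lnorm_iterate_le (k : ℕ) {s : ℕ → ℝ≥0} (hs : InLinf s) :
    lnorm (Γ^[k] s) ≤ lnorm (Γ^[k] oneSeq) * lnorm s :=
  lnorm_le fun i => (iterate_le_lnorm_mul hmap hmono hhom k hs i).trans <| by
    rw [mul_comm]; gcongr; exact le_lnorm (inLinf_iterate hmap k inLinf_oneSeq) i

include hmono hhom in
lemma lnorm_iterate_add_le (m n : ℕ) :
    lnorm (Γ^[m + n] oneSeq) ≤ lnorm (Γ^[m] oneSeq) * lnorm (Γ^[n] oneSeq) := by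
  rw [Function.iterate_add_apply]
  exact lnorm_iterate_le hmap hmono hhom m (inLinf_iterate hmap n inLinf_oneSeq)

include hmono hhom in
lemma iterate_le_pow_mul {s : ℕ → ℝ≥0} (hs : InLinf s) {lam : ℝ≥0}
    (hdec : ∀ i, Γ s i ≤ lam * s i) (n i : ℕ) : Γ^[n] s i ≤ lam ^ n * s i := by
  induction n generalizing i with
  | zero => simp
  | succ n ih =>
    rw [Function.iterate_succ_apply']
    calc Γ (Γ^[n] s) i ≤ Γ (fun j => lam ^ n * s j) i :=
          hmono _ _ (inLinf_iterate hmap n hs) (hs.const_mul _) ih i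
      _ = lam ^ n * Γ s i := hhom _ _ hs i
      _ ≤ lam ^ n * (lam * s i) := by gcongr; exact hdec i
      _ = lam ^ (n + 1) * s i := by ring

include hmono hhom in
lemma isUGES_of_lnorm_iterate_lt_one {n : ℕ} (hn : lnorm (Γ^[n] oneSeq) < 1) : IsUGES Γ := by
  obtain ⟨M, hM, a, ha0, ha1, hc⟩ := exists_geometric_bound_of_submultiplicative
    (c := fun k => lnorm (Γ^[k] oneSeq)) (lnorm_iterate_add_le hmap hmono hhom)
    (ne_zero_of_lnorm_iterate_lt_one hn) hn
  refine ⟨M, hM, a, ha0, ha1, fun s hs k => ?_⟩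
  exact (lnorm_iterate_le hmap hmono hhom k hs).trans (by gcongr; exact hc k)

lemma inLinf_weightedOrbitSum (lam : ℝ≥0) (m : ℕ) : InLinf (weightedOrbitSum Γ lam m) :=
  InLinf.sum fun j _ => (inLinf_iterate hmap j inLinf_oneSeq).const_mul _

include hsub hhom in
lemma map_weightedOrbitSum_le {lam : ℝ≥0} (hlam : lam ≠ 0) {m : ℕ}
    (hm : ∀ i, Γ^[m] oneSeq i ≤ lam ^ m) (i : ℕ) :
    Γ (weightedOrbitSum Γ lam m) i ≤ lam * weightedOrbitSum Γ lam m i := by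
  set g : ℕ → ℝ≥0 := fun j => lam * ((lam ^ j)⁻¹ * Γ^[j] oneSeq i)
  have hshift : ∀ j, Γ (fun i' => (lam ^ j)⁻¹ * Γ^[j] oneSeq i') i = g (j + 1) := fun j => by
    rw [hhom _ _ (inLinf_iterate hmap j inLinf_oneSeq), ← Function.iterate_succ_apply' Γ]
    simp only [g]
    field_simp
    ring
  have hgm : g m ≤ g 0 := by
    calc g m ≤ lam * ((lam ^ m)⁻¹ * lam ^ m) := by simp only [g]; gcongr; exact hm i
      _ = g 0 := by simp [g, oneSeq, pow_ne_zero m hlam]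
  calc Γ (weightedOrbitSum Γ lam m) i
      ≤ ∑ j ∈ Finset.range m, Γ (fun i' => (lam ^ j)⁻¹ * Γ^[j] oneSeq i') i :=
        map_sum_le hsub hhom _ (fun j _ => (inLinf_iterate hmap j inLinf_oneSeq).const_mul _) i
    _ = ∑ j ∈ Finset.range m, g (j + 1) := Finset.sum_congr rfl fun j _ => hshift j
    _ ≤ ∑ j ∈ Finset.range m, g j := Finset.sum_range_succ_le_sum_range g hgm
    _ = lam * weightedOrbitSum Γ lam m i := (Finset.mul_sum _ _ _).symm

include hsub hhom in
lemma hasStrictDecayPoint_of_lnorm_iterate_lt_one {m : ℕ} (hm : lnorm (Γ^[m] oneSeq) < 1) :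
    HasStrictDecayPoint Γ := by
  have hm0 := ne_zero_of_lnorm_iterate_lt_one hm
  obtain ⟨lam, hlam0, hlam1, hmlam⟩ := exists_pos_lt_one_le_pow hm hm0
  refine ⟨lam, hlam0, hlam1, weightedOrbitSum Γ lam m, inLinf_weightedOrbitSum hmap lam m,
    one_pos.trans_le (le_ciInf (one_le_weightedOrbitSum lam hm0)), ?_⟩
  exact map_weightedOrbitSum_le hmap hsub hhom hlam0.ne'
    (fun i => (le_lnorm (inLinf_iterate hmap m inLinf_oneSeq) i).trans hmlam)

include hmono hhom in
lemma HasStrictDecayPoint.exists_lnorm_iterate_lt_one (h : HasStrictDecayPoint Γ) :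
    ∃ n, lnorm (Γ^[n] oneSeq) < 1 := by
  obtain ⟨lam, -, hlam1, s0, hs0, hinf, hdec⟩ := h
  set ε := ⨅ i, s0 i
  have hone : ∀ i, oneSeq i ≤ ε⁻¹ * s0 i := fun i => by
    rw [oneSeq, ← inv_mul_cancel₀ hinf.ne']
    gcongr
    exact ciInf_le (OrderBot.bddBelow _) i
  obtain ⟨n, hn⟩ := exists_const_mul_pow_lt_one (ε⁻¹ * lnorm s0) hlam1
  refine ⟨n, (lnorm_le fun i => ?_).trans_lt hn⟩
  calc Γ^[n] oneSeq i ≤ Γ^[n] (fun j => ε⁻¹ * s0 j) i :=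
        iterate_mono hmap hmono n inLinf_oneSeq (hs0.const_mul _) hone i
    _ = ε⁻¹ * Γ^[n] s0 i := iterate_const_mul hmap hhom n _ hs0 i
    _ ≤ ε⁻¹ * (lam ^ n * lnorm s0) := by
        gcongr; exact (iterate_le_pow_mul hmap hmono hhom hs0 hdec n i).trans (by
          gcongr; exact le_lnorm hs0 i)
    _ = ε⁻¹ * lnorm s0 * lam ^ n := by ring

end GainOperator

theorem small_gain_equivalences_general
    (Γ : (ℕ → ℝ≥0) → ℕ → ℝ≥0)
    (hmap : ∀ s, InLinf s → InLinf (Γ s))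
    (hmono : ∀ r s, InLinf r → InLinf s → (∀ i, r i ≤ s i) → ∀ i, Γ r i ≤ Γ s i)
    (hsub : ∀ r s, InLinf r → InLinf s → ∀ i, Γ (fun j => r j + s j) i ≤ Γ r i + Γ s i)
    (hhom : ∀ (c : ℝ≥0) (s : ℕ → ℝ≥0), InLinf s → ∀ i, Γ (fun j => c * s j) i = c * Γ s i) :
    ((∃ n : ℕ, lnorm (Γ^[n] oneSeq) < 1) ↔
      (∃ M : ℝ≥0, 0 < M ∧ ∃ a : ℝ≥0, 0 < a ∧ a < 1 ∧
        ∀ s, InLinf s → ∀ k : ℕ, lnorm (Γ^[k] s) ≤ M * a ^ k * lnorm s)) ∧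
    ((∃ M : ℝ≥0, 0 < M ∧ ∃ a : ℝ≥0, 0 < a ∧ a < 1 ∧
        ∀ s, InLinf s → ∀ k : ℕ, lnorm (Γ^[k] s) ≤ M * a ^ k * lnorm s) ↔
      (∃ b : ℕ → ℝ≥0, Antitone b ∧ Tendsto b atTop (nhds 0) ∧
        ∀ s, InLinf s → ∀ k : ℕ, lnorm (Γ^[k] s) ≤ b k * lnorm s)) ∧
    ((∃ b : ℕ → ℝ≥0, Antitone b ∧ Tendsto b atTop (nhds 0) ∧
        ∀ s, InLinf s → ∀ k : ℕ, lnorm (Γ^[k] s) ≤ b k * lnorm s) ↔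
      (∃ lam : ℝ≥0, 0 < lam ∧ lam < 1 ∧ ∃ s0 : ℕ → ℝ≥0, InLinf s0 ∧ (0 < ⨅ i, s0 i) ∧
        ∀ i, Γ s0 i ≤ lam * s0 i)) := by
  have uges_of_small_gain : (∃ n, lnorm (Γ^[n] oneSeq) < 1) → IsUGES Γ :=
    fun ⟨_, hn⟩ => isUGES_of_lnorm_iterate_lt_one hmap hmono hhom hn
  have small_gain_of_ugas : IsUGAS Γ → ∃ n, lnorm (Γ^[n] oneSeq) < 1 :=
    IsUGAS.exists_lnorm_iterate_lt_one
  have decay_of_small_gain : (∃ n, lnorm (Γ^[n] oneSeq) < 1) → HasStrictDecayPoint Γ :=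
    fun ⟨_, hn⟩ => hasStrictDecayPoint_of_lnorm_iterate_lt_one hmap hsub hhom hn
  have small_gain_of_decay : HasStrictDecayPoint Γ → ∃ n, lnorm (Γ^[n] oneSeq) < 1 :=
    HasStrictDecayPoint.exists_lnorm_iterate_lt_one hmap hmono hhom
  exact ⟨⟨uges_of_small_gain, fun h => small_gain_of_ugas (IsUGES.isUGAS h)⟩,
    ⟨IsUGES.isUGAS, fun h => uges_of_small_gain (small_gain_of_ugas h)⟩,
    ⟨fun h => decay_of_small_gain (small_gain_of_ugas h),
      fun h => (uges_of_small_gain (small_gain_of_decay h)).isUGAS⟩⟩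

/-- For a continuous, monotone, subadditive, homogeneous-of-degree-one operator
`Γ : ℓ∞⁺ → ℓ∞⁺`, the following are equivalent: (i) `‖Γⁿ(𝟙)‖ < 1` for some `n`
(the small-gain / spectral radius condition); (ii) UGES of the induced discrete-time system;
(iii) UGAS of the induced discrete-time system; (iv) existence of a point of strict decay. -/
theorem small_gain_equivalences
    (Γ : (ℕ → ℝ≥0) → ℕ → ℝ≥0)
    (hmap : ∀ s, InLinf s → InLinf (Γ s))
    (hcont : ∀ s, InLinf s → ∀ ε : ℝ, 0 < ε → ∃ δ : ℝ, 0 < δ ∧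
      ∀ r, InLinf r → supDist r s < δ → supDist (Γ r) (Γ s) < ε)
    (hmono : ∀ r s, InLinf r → InLinf s → (∀ i, r i ≤ s i) → ∀ i, Γ r i ≤ Γ s i)
    (hsub : ∀ r s, InLinf r → InLinf s → ∀ i, Γ (fun j => r j + s j) i ≤ Γ r i + Γ s i)
    (hhom : ∀ (c : ℝ≥0) (s : ℕ → ℝ≥0), InLinf s → ∀ i, Γ (fun j => c * s j) i = c * Γ s i) :
    ((∃ n : ℕ, lnorm (Γ^[n] oneSeq) < 1) ↔
      (∃ M : ℝ≥0, 0 < M ∧ ∃ a : ℝ≥0, 0 < a ∧ a < 1 ∧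
        ∀ s, InLinf s → ∀ k : ℕ, lnorm (Γ^[k] s) ≤ M * a ^ k * lnorm s)) ∧
    ((∃ M : ℝ≥0, 0 < M ∧ ∃ a : ℝ≥0, 0 < a ∧ a < 1 ∧
        ∀ s, InLinf s → ∀ k : ℕ, lnorm (Γ^[k] s) ≤ M * a ^ k * lnorm s) ↔
      (∃ b : ℕ → ℝ≥0, Antitone b ∧ Tendsto b atTop (nhds 0) ∧
        ∀ s, InLinf s → ∀ k : ℕ, lnorm (Γ^[k] s) ≤ b k * lnorm s)) ∧
    ((∃ b : ℕ → ℝ≥0, Antitone b ∧ Tendsto b atTop (nhds 0) ∧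
        ∀ s, InLinf s → ∀ k : ℕ, lnorm (Γ^[k] s) ≤ b k * lnorm s) ↔
      (∃ lam : ℝ≥0, 0 < lam ∧ lam < 1 ∧ ∃ s0 : ℕ → ℝ≥0, InLinf s0 ∧ (0 < ⨅ i, s0 i) ∧
        ∀ i, Γ s0 i ≤ lam * s0 i)) :=
  small_gain_equivalences_general Γ hmap hmono hsub hhom
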